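/- arXiv:2203.08000 — 5 statements merged into one kernel-verified Lean document; each statement's English description precedes it below -/
import Mathlib

section
/- Let (f_1, …, f_10) be a 10-tuple of vectors in E₁₀ such that ⟨f_i, f_j⟩ = 1 − δ_ij for all i, j (i.e. ⟨f_i, f_i⟩ = 0 and ⟨f_i, f_j⟩ = 1 for i ≠ j). Then for each pair of indices i, j with 1 ≤ i ≠ j ≤ 10, there exists an isotropic vector e ∈ E₁₀ (that is, ⟨e, e⟩ = 0) such that ⟨e, f_i⟩ = ⟨e, f_j⟩ = 2 and ⟨e, f_k⟩ = 1 for every k ≠ i, j. (Lemma 2.4 / Cossec's Lemma.) -/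
/-!
The Gram matrix of the `f k` is `J - I`, of determinant `-9`. As `E₁₀` is unimodular, the matrix
`A` with rows `f k` has `det A = ±3`. With `G` the Gram matrix of `E₁₀`, the sum `F = ∑ f k`
satisfies `A G F = 9 · 𝟙 = det A · (det A · 𝟙)`, so inverting `A` through its adjugate shows
that `G F`, hence `F`, is divisible by `3` in the lattice. For `F = 3 d` we get `⟨d, f k⟩ = 3`
and `⟨d, d⟩ = 10`, and `e = d - f i - f j` is the required isotropic vector.
-/

open Matrix BigOperators

/-- The Gram matrix of the even unimodular hyperbolic lattice `E₁₀ = U ⊕ E₈(−1)`: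
indices 0,1 span the hyperbolic plane `U`, and indices 2,…,9 carry the negative
definite `E₈` form (diagonal `−2`, entry `1` for vertices adjacent in the `E₈`
Dynkin diagram). -/
def E10Gram : Matrix (Fin 10) (Fin 10) ℤ :=
  !![0, 1,  0,  0,  0,  0,  0,  0,  0,  0;
     1, 0,  0,  0,  0,  0,  0,  0,  0,  0;
     0, 0, -2,  1,  0,  0,  0,  0,  0,  0;
     0, 0,  1, -2,  1,  0,  0,  0,  0,  0;
     0, 0,  0,  1, -2,  1,  0,  0,  0,  1;
     0, 0,  0,  0,  1, -2,  1,  0,  0,  0;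
     0, 0,  0,  0,  0,  1, -2,  1,  0,  0;
     0, 0,  0,  0,  0,  0,  1, -2,  1,  0;
     0, 0,  0,  0,  0,  0,  0,  1, -2,  0;
     0, 0,  0,  0,  1,  0,  0,  0,  0, -2]

/-- The symmetric bilinear form on `E₁₀ = ℤ¹⁰` with Gram matrix `E10Gram`. -/
def E10Pair (v w : Fin 10 → ℤ) : ℤ := ∑ i, ∑ j, v i * E10Gram i j * w j

lemma Matrix.det_ones_sub_one {n R : Type*} [Fintype n] [DecidableEq n] [CommRing R] :
    (of (fun _ _ => (1 : R)) - 1 : Matrix n n R).det =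
      (-1) ^ Fintype.card n * (1 - Fintype.card n) := by
  have hJ : (of (fun _ _ => (1 : R)) : Matrix n n R) =
      replicateCol Unit (fun _ => (1 : R)) * replicateRow Unit (fun _ => (1 : R)) := by
    ext; simp [mul_apply]
  rw [← neg_sub, det_neg, hJ, det_one_sub_mul_comm, det_unique]
  simp [mul_apply]

lemma Matrix.sq_det_eq_abs_det_of_mul_mul_transpose_eq {n : Type*} [Fintype n] [DecidableEq n]
    {A G H : Matrix n n ℤ} (hG : IsUnit G.det) (h : A * G * Aᵀ = H) : A.det ^ 2 = |H.det| := by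
  rw [← h, det_mul, det_mul, det_transpose]
  rcases Int.isUnit_iff.mp hG with hG | hG <;> simp [hG, abs_mul, sq, abs_mul_abs_self]

lemma Matrix.eq_smul_adjugate_mulVec_of_mulVec_eq {n R : Type*} [Fintype n] [DecidableEq n]
    [CommRing R] [IsDomain R] {A : Matrix n n R} (hA : A.det ≠ 0) {y w : n → R} {k : R}
    (h : A *ᵥ y = (A.det * k) • w) : y = k • (A.adjugate *ᵥ w) := by
  apply smul_right_injective _ hA
  calc A.det • y = A.adjugate *ᵥ (A *ᵥ y) := by
        rw [mulVec_mulVec, adjugate_mul, smul_mulVec, one_mulVec]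
    _ = A.det • k • (A.adjugate *ᵥ w) := by rw [h, mulVec_smul, mul_smul]

def E10Inv : Matrix (Fin 10) (Fin 10) ℤ :=
  !![0, 1,   0,   0,   0,   0,   0,   0,  0,   0;
     1, 0,   0,   0,   0,   0,   0,   0,  0,   0;
     0, 0,  -4,  -7, -10,  -8,  -6,  -4, -2,  -5;
     0, 0,  -7, -14, -20, -16, -12,  -8, -4, -10;
     0, 0, -10, -20, -30, -24, -18, -12, -6, -15;
     0, 0,  -8, -16, -24, -20, -15, -10, -5, -12;
     0, 0,  -6, -12, -18, -15, -12,  -8, -4,  -9;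
     0, 0,  -4,  -8, -12, -10,  -8,  -6, -3,  -6;
     0, 0,  -2,  -4,  -6,  -5,  -4,  -3, -2,  -3;
     0, 0,  -5, -10, -15, -12,  -9,  -6, -3,  -8]

lemma E10Gram_mul_E10Inv : E10Gram * E10Inv = 1 := by decide

lemma E10Inv_mul_E10Gram : E10Inv * E10Gram = 1 := mul_eq_one_comm.mp E10Gram_mul_E10Inv

lemma E10Gram_isSymm : E10Gram.IsSymm := by decide

lemma E10Pair_eq_toLinearMap₂' (v w : Fin 10 → ℤ) :
    E10Pair v w = toLinearMap₂' ℤ E10Gram v w := by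
  simp [E10Pair, toLinearMap₂'_apply, mul_comm, mul_left_comm]

lemma E10Pair_eq_dotProduct_mulVec (v w : Fin 10 → ℤ) : E10Pair v w = v ⬝ᵥ E10Gram *ᵥ w := by
  rw [E10Pair_eq_toLinearMap₂', toLinearMap₂'_apply']

lemma E10Pair_comm (v w : Fin 10 → ℤ) : E10Pair v w = E10Pair w v := by
  rw [E10Pair_eq_dotProduct_mulVec, E10Pair_eq_dotProduct_mulVec, dotProduct_mulVec,
    ← mulVec_transpose, E10Gram_isSymm.eq, dotProduct_comm]

lemma E10Pair_sub_left (u v w : Fin 10 → ℤ) : E10Pair (u - v) w = E10Pair u w - E10Pair v w := by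
  simp only [E10Pair_eq_toLinearMap₂', map_sub, LinearMap.sub_apply]

lemma E10Pair_sub_right (u v w : Fin 10 → ℤ) : E10Pair u (v - w) = E10Pair u v - E10Pair u w := by
  simp only [E10Pair_eq_toLinearMap₂', map_sub]

lemma E10Pair_smul_right (c : ℤ) (v w : Fin 10 → ℤ) : E10Pair v (c • w) = c * E10Pair v w := by
  simp only [E10Pair_eq_toLinearMap₂', map_smul, smul_eq_mul]

lemma E10Pair_sum_right {ι : Type*} (s : Finset ι) (v : Fin 10 → ℤ) (w : ι → Fin 10 → ℤ) :
    E10Pair v (∑ k ∈ s, w k) = ∑ k ∈ s, E10Pair v (w k) := by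
  simp only [E10Pair_eq_toLinearMap₂', map_sum]

lemma of_mul_E10Gram_mul_transpose (f : Fin 10 → Fin 10 → ℤ) :
    of f * E10Gram * (of f)ᵀ = of fun a b => E10Pair (f a) (f b) := by
  ext a b
  simp only [E10Pair, mul_apply, of_apply, transpose_apply, Finset.sum_mul]
  exact Finset.sum_comm

section CossecConfiguration

variable {f : Fin 10 → Fin 10 → ℤ} (hf : ∀ i j, E10Pair (f i) (f j) = 1 - if i = j then 1 else 0)
include hf

lemma of_mul_E10Gram_mul_transpose_eq_ones_sub_one :
    of f * E10Gram * (of f)ᵀ = of (fun _ _ => 1) - 1 := by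
  rw [of_mul_E10Gram_mul_transpose]
  ext a b
  simp [hf, one_apply]

lemma sq_det_eq_nine : (of f).det ^ 2 = 9 := by
  rw [sq_det_eq_abs_det_of_mul_mul_transpose_eq (isUnit_det_of_right_inverse E10Gram_mul_E10Inv)
    (of_mul_E10Gram_mul_transpose_eq_ones_sub_one hf), det_ones_sub_one]
  norm_num

lemma E10Pair_sum_eq_nine (a : Fin 10) : E10Pair (f a) (∑ k, f k) = 9 := by
  simp [E10Pair_sum_right, hf, Finset.sum_sub_distrib]

lemma exists_three_smul_eq_sum : ∃ d : Fin 10 → ℤ, (3 : ℤ) • d = ∑ k, f k := by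
  have hdet := sq_det_eq_nine hf
  obtain ⟨c, hc⟩ : (3 : ℤ) ∣ (of f).det := by
    rcases sq_eq_sq_iff_eq_or_eq_neg.mp (hdet.trans (by norm_num : (9 : ℤ) = 3 ^ 2)) with h | h
      <;> simp [h]
  have hAy : of f *ᵥ (E10Gram *ᵥ ∑ k, f k) = ((of f).det * (of f).det) • fun _ => 1 := by
    ext a
    rw [← sq, hdet]
    simpa [mulVec, ← E10Pair_eq_dotProduct_mulVec] using E10Pair_sum_eq_nine hf a
  have hy := eq_smul_adjugate_mulVec_of_mulVec_eq (by intro h; simp [h] at hdet) hAy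
  refine ⟨E10Inv *ᵥ (c • (of f).adjugate *ᵥ fun _ => 1), ?_⟩
  calc (3 : ℤ) • E10Inv *ᵥ (c • (of f).adjugate *ᵥ fun _ => 1)
      = E10Inv *ᵥ (E10Gram *ᵥ ∑ k, f k) := by simp only [hy, hc, mul_smul, mulVec_smul]
    _ = ∑ k, f k := by rw [mulVec_mulVec, E10Inv_mul_E10Gram, one_mulVec]

lemma exists_E10Pair_eq_three_and_self_eq_ten :
    ∃ d : Fin 10 → ℤ, (∀ k, E10Pair d (f k) = 3) ∧ E10Pair d d = 10 := by
  obtain ⟨d, hd⟩ := exists_three_smul_eq_sum hf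
  have hdf (k : Fin 10) : E10Pair d (f k) = 3 := by
    have h := E10Pair_sum_eq_nine hf k
    rw [← hd, E10Pair_smul_right] at h
    rw [E10Pair_comm]
    omega
  refine ⟨d, hdf, ?_⟩
  have h : 3 * E10Pair d d = 30 := by
    rw [← E10Pair_smul_right, hd, E10Pair_sum_right]
    simp [hdf]
  omega

end CossecConfiguration

/-- Cossec's Lemma: if `(f 0, …, f 9)` is a 10-tuple of vectors of `E₁₀` with
`⟨f i, f j⟩ = 1 − δ_ij`, then for every pair of distinct indices `i ≠ j` there is an
isotropic vector `e` with `⟨e, f i⟩ = ⟨e, f j⟩ = 2` and `⟨e, f k⟩ = 1` for `k ≠ i, j`. -/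
theorem cossec_lemma (f : Fin 10 → Fin 10 → ℤ)
    (hf : ∀ i j, E10Pair (f i) (f j) = 1 - if i = j then 1 else 0) :
    ∀ i j : Fin 10, i ≠ j → ∃ e : Fin 10 → ℤ,
      E10Pair e e = 0 ∧
      E10Pair e (f i) = 2 ∧
      E10Pair e (f j) = 2 ∧
      ∀ k : Fin 10, k ≠ i → k ≠ j → E10Pair e (f k) = 1 := by
  intro i j hij
  obtain ⟨d, hdf, hdd⟩ := exists_E10Pair_eq_three_and_self_eq_ten hf
  have hfd (k : Fin 10) : E10Pair (f k) d = 3 := (E10Pair_comm _ _).trans (hdf k)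
  refine ⟨d - f i - f j, ?_, ?_, ?_, fun k hki hkj => ?_⟩ <;>
    simp only [E10Pair_sub_left, E10Pair_sub_right, hdd, hdf, hfd, hf]
  · simp [hij, hij.symm]
  · simp [hij.symm]
  · simp [hij]
  · simp [hki.symm, hkj.symm]
end

section
/- Let (f_1, …, f_10) be a 10-tuple of vectors in E₁₀ such that ⟨f_i, f_j⟩ = 1 − δ_ij for all i, j, and let e ∈ E₁₀ be an isotropic vector (⟨e, e⟩ = 0) satisfying ⟨e, f_1⟩ = ⟨e, f_2⟩ = 2 and ⟨e, f_k⟩ = 1 for all 3 ≤ k ≤ 10. Then the vectors f_1, …, f_10 together with e generate E₁₀ as a ℤ-module, i.e. the ℤ-submodule of E₁₀ spanned by {f_1, …, f_10, e} is all of E₁₀. (Claim established in the proof of Corollary 2.5.) -/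
open Matrix BigOperators

/-! Put `u = e + f 0 + f 1`. Each `f m` pairs to `3` with `u`, and `(∑ j, f j) / 3` has the
same pairings; since the Gram matrix `J - I` of the `f j` is nonsingular (determinant `-9`),
`∑ j, f j = 3 • u`. Consequently every `x` equals `⟨u, x⟩ • u - ∑ j, ⟨f j, x⟩ • f j`: both sides
pair in the same way with every `f m`, because `∑ j, ⟨f j, x⟩ = ⟨∑ j, f j, x⟩ = 3 ⟨u, x⟩`. -/

section
variable {R V ι : Type*} [CommRing R] [AddCommGroup V] [Module R V] [Fintype ι] [DecidableEq ι]
  {B : LinearMap.BilinForm R V} {f : ι → V}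

lemma apply_sum_smul_of_gram (hf : ∀ i j, B (f i) (f j) = 1 - if i = j then 1 else 0)
    (c : ι → R) (m : ι) : B (f m) (∑ j, c j • f j) = (∑ j, c j) - c m := by
  simp [map_sum, hf, mul_sub, Finset.sum_sub_distrib]

lemma sum_eq_smul_of_gram {u : V} {k : R} (hsep : ∀ z, (∀ m, B (f m) z = 0) → z = 0)
    (hf : ∀ i j, B (f i) (f j) = 1 - if i = j then 1 else 0) (hu : ∀ m, B (f m) u = k)
    (hk : (Fintype.card ι : R) - 1 = k * k) : ∑ j, f j = k • u := by
  refine sub_eq_zero.mp (hsep _ fun m => ?_)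
  have hsum := apply_sum_smul_of_gram hf (fun _ => 1) m
  simp only [one_smul, Finset.sum_const, Finset.card_univ, nsmul_eq_mul, mul_one] at hsum
  rw [map_sub, hsum, map_smul, hu, hk, smul_eq_mul, sub_self]

lemma eq_smul_sub_sum_of_gram {u : V} {k : R} (hsep : ∀ z, (∀ m, B (f m) z = 0) → z = 0)
    (hf : ∀ i j, B (f i) (f j) = 1 - if i = j then 1 else 0) (hu : ∀ m, B (f m) u = k)
    (hk : (Fintype.card ι : R) - 1 = k * k) (x : V) :
    x = B u x • u - ∑ j, B (f j) x • f j := by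
  have hsum : ∑ j, B (f j) x = k * B u x := by
    rw [← LinearMap.sum_apply, ← map_sum, sum_eq_smul_of_gram hsep hf hu hk, map_smul]
    rfl
  refine sub_eq_zero.mp (hsep _ fun m => ?_)
  rw [map_sub, map_sub, map_smul, apply_sum_smul_of_gram hf, hsum, hu, smul_eq_mul]
  ring

lemma span_range_union_singleton_eq_top_of_gram {u : V} {k : R}
    (hsep : ∀ z, (∀ m, B (f m) z = 0) → z = 0)
    (hf : ∀ i j, B (f i) (f j) = 1 - if i = j then 1 else 0) (hu : ∀ m, B (f m) u = k)
    (hk : (Fintype.card ι : R) - 1 = k * k) :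
    Submodule.span R (Set.range f ∪ {u}) = ⊤ := by
  refine eq_top_iff.mpr fun x _ => ?_
  rw [eq_smul_sub_sum_of_gram hsep hf hu hk x]
  exact sub_mem (Submodule.smul_mem _ _ (Submodule.subset_span (Or.inr rfl)))
    (Submodule.sum_mem _ fun j _ =>
      Submodule.smul_mem _ _ (Submodule.subset_span (Or.inl ⟨j, rfl⟩)))

end

theorem Matrix.det_of_one_sub_ite {R ι : Type*} [CommRing R] [Fintype ι] [DecidableEq ι] :
    (Matrix.of fun i j : ι => (1 : R) - if i = j then 1 else 0).det
      = (-1) ^ Fintype.card ι * (1 - Fintype.card ι) := by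
  have h : (Matrix.of fun i j : ι => (1 : R) - if i = j then 1 else 0)
      = -(1 + replicateCol Unit (-1 : ι → R) * replicateRow Unit (1 : ι → R)) := by
    ext i j
    simp [one_apply, mul_apply, sub_eq_neg_add, add_comm]
  rw [h, det_neg, det_one_add_replicateCol_mul_replicateRow, dotProduct_neg, one_dotProduct_one,
    sub_eq_add_neg]

theorem Matrix.eq_zero_of_forall_toBilin'_eq_zero {R ι : Type*} [CommRing R] [IsDomain R]
    [Fintype ι] [DecidableEq ι] {G : Matrix ι ι R} {f : ι → ι → R}
    (hdet : (Matrix.of fun i j => G.toBilin' (f i) (f j)).det ≠ 0) {z : ι → R}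
    (hz : ∀ m, G.toBilin' (f m) z = 0) : z = 0 := by
  have hgram : (Matrix.of fun i j => G.toBilin' (f i) (f j)) = of f * G * (of f)ᵀ := by
    ext i j
    simp only [toBilin'_apply, of_apply, mul_apply, transpose_apply, Finset.sum_mul]
    exact Finset.sum_comm
  refine eq_zero_of_mulVec_eq_zero (M := of f * G) ?_ (funext fun m => ?_)
  · exact left_ne_zero_of_mul (by rwa [← det_mul, ← hgram])
  · rw [← mulVec_mulVec]
    exact (toBilin'_apply' G (f m) z).symm.trans (hz m)

lemma E10Pair_eq_toBilin' (v w : Fin 10 → ℤ) : E10Pair v w = E10Gram.toBilin' v w :=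
  (toBilin'_apply _ _ _).symm

theorem generate_E10_general (f : Fin 10 → Fin 10 → ℤ)
    (hf : ∀ i j, E10Pair (f i) (f j) = 1 - if i = j then 1 else 0)
    (e : Fin 10 → ℤ)
    (he0 : E10Pair e (f 0) = 2) (he1 : E10Pair e (f 1) = 2)
    (hek : ∀ k : Fin 10, 2 ≤ (k : ℕ) → E10Pair e (f k) = 1) :
    Submodule.span ℤ (Set.range f ∪ {e}) = ⊤ := by
  have hgram : ∀ i j, E10Gram.toBilin' (f i) (f j) = 1 - if i = j then 1 else 0 := by
    simpa only [E10Pair_eq_toBilin'] using hf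
  have hsep : ∀ z, (∀ m, E10Gram.toBilin' (f m) z = 0) → z = 0 := fun z =>
    eq_zero_of_forall_toBilin'_eq_zero (by simp [hgram, det_of_one_sub_ite])
  have hu : ∀ m, E10Gram.toBilin' (f m) (e + f 0 + f 1) = 3 := by
    intro m
    simp only [map_add, ← E10Pair_eq_toBilin', E10Pair_comm (f m) e, hf]
    fin_cases m <;> simp [he0, he1, hek]
  rw [eq_top_iff, ← span_range_union_singleton_eq_top_of_gram hsep hgram hu (by norm_num),
    Submodule.span_le]
  rintro _ (⟨j, rfl⟩ | rfl)
  · exact Submodule.subset_span (Or.inl ⟨j, rfl⟩)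
  · exact add_mem (add_mem (Submodule.subset_span (Or.inr rfl))
      (Submodule.subset_span (Or.inl ⟨0, rfl⟩))) (Submodule.subset_span (Or.inl ⟨1, rfl⟩))

/-- If `(f 0, …, f 9)` is a 10-tuple of vectors of `E₁₀` with `⟨f i, f j⟩ = 1 − δ_ij`
and `e` is an isotropic vector with `⟨e, f 0⟩ = ⟨e, f 1⟩ = 2` and `⟨e, f k⟩ = 1` for
`k ≥ 2`, then `f 0, …, f 9` together with `e` generate `E₁₀` as a ℤ-module. -/
theorem generate_E10 (f : Fin 10 → Fin 10 → ℤ)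
    (hf : ∀ i j, E10Pair (f i) (f j) = 1 - if i = j then 1 else 0)
    (e : Fin 10 → ℤ)
    (he : E10Pair e e = 0)
    (he0 : E10Pair e (f 0) = 2) (he1 : E10Pair e (f 1) = 2)
    (hek : ∀ k : Fin 10, 2 ≤ (k : ℕ) → E10Pair e (f k) = 1) :
    Submodule.span ℤ (Set.range f ∪ {e}) = ⊤ :=
  generate_E10_general f hf e he0 he1 hek
end

section
/- Let e, f ∈ E₁₀ satisfy ⟨e, e⟩ = ⟨f, f⟩ = 0 and ⟨e, f⟩ = 1, and let M = {v ∈ E₁₀ : ⟨v, e⟩ = 0 and ⟨v, f⟩ = 0} be the orthogonal complement of the span of e and f. Then M is a free ℤ-module of rank 8, the restriction of ⟨·,·⟩ to M is even (⟨v, v⟩ is divisible by 2 for every v ∈ M), negative definite (⟨v, v⟩ < 0 for every nonzero v ∈ M), and unimodular (the Gram matrix of any ℤ-basis of M has determinant ±1). (Lattice-theoretic content of the proof of Proposition 2.8(2).) -/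
open Matrix BigOperators

/-!
The hyperbolic pair splits off: `v ↦ (⟨v,f⟩, ⟨v,e⟩, v - ⟨v,f⟩e - ⟨v,e⟩f)` identifies `E₁₀` with
`ℤ² × M`, so `M` has rank `8`, and in a basis adapted to this splitting the Gram matrix of `E₁₀` is
`U ⊕ G`, with `G` the Gram matrix of a basis of `M`. Gram matrices of `E₁₀` have unit determinant
and `det U = -1`, hence `det G = ±1`. Evenness holds on all of `E₁₀`, whose Gram matrix has even
diagonal.

For definiteness, the form is negative definite on the hyperplane `ℓ v = v₀ + v₁ = 0`, being there
minus a sum of squares. Put `t = e + f`, so `⟨t,t⟩ = 2`. For `v ∈ M` with `ℓ v ≠ 0`, the vector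
`x = ℓ(v) t - ℓ(t) v` lies in the hyperplane and `⟨x,x⟩ = 2 ℓ(v)² + ℓ(t)² ⟨v,v⟩ ≤ 0`, which forces
`⟨v,v⟩ < 0`.
-/

namespace LinearMap.BilinForm

variable {R V : Type*} [CommRing R] [AddCommGroup V] [Module R V]

theorem isUnit_det_toMatrix_iff [Nontrivial R] {ι κ : Type*} [Fintype ι] [DecidableEq ι]
    [Fintype κ] [DecidableEq κ] (B : LinearMap.BilinForm R V) (b : Module.Basis ι R V)
    (c : Module.Basis κ R V) :
    IsUnit (B.toMatrix b).det ↔ IsUnit (B.toMatrix c).det := by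
  suffices key : ∀ b c : Module.Basis ι R V,
      IsUnit (B.toMatrix b).det → IsUnit (B.toMatrix c).det by
    have hc : (B.toMatrix (c.reindex (c.indexEquiv b))).det = (B.toMatrix c).det := by
      rw [← Matrix.det_submatrix_equiv_self (c.indexEquiv b).symm]
      congr 1
      ext i j
      simp [toMatrix_apply]
    rw [← hc]
    exact ⟨key _ _, key _ _⟩
  intro b c h
  have hbc := b.isUnit_det c
  rw [Module.Basis.det_apply] at hbc
  rw [← toMatrix_mul_basis_toMatrix b c, Matrix.det_mul, Matrix.det_mul, Matrix.det_transpose]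
  exact (hbc.mul h).mul hbc

theorem apply_self_neg_of_ortho_of_pos [LinearOrder R] [IsStrictOrderedRing R]
    {B : LinearMap.BilinForm R V} (hB : B.IsSymm) {ℓ : V →ₗ[R] R}
    (hℓ : ∀ x, ℓ x = 0 → x ≠ 0 → B x x < 0) {t v : V} (ht : 0 < B t t) (hvt : B v t = 0)
    (hv : v ≠ 0) : B v v < 0 := by
  by_cases hℓv : ℓ v = 0
  · exact hℓ v hℓv hv
  set x := ℓ v • t - ℓ t • v
  have hxx : B x x ≤ 0 := by
    rcases eq_or_ne x 0 with hx | hx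
    · simp [hx]
    · exact (hℓ x (by simp [x, mul_comm]) hx).le
  have hBx : B x x = ℓ v ^ 2 * B t t + ℓ t ^ 2 * B v v := by
    simp only [x, map_sub, map_smul, LinearMap.sub_apply, smul_apply, smul_eq_mul, hB.eq t v, hvt,
      mul_zero, sub_zero, zero_sub, mul_neg, sub_neg_eq_add]
    ring
  have hpos : 0 < ℓ v ^ 2 * B t t := mul_pos (sq_pos_of_ne_zero hℓv) ht
  by_contra! hvv
  nlinarith [mul_nonneg (sq_nonneg (ℓ t)) hvv]

variable {B : LinearMap.BilinForm R V} {e f : V} {M : Submodule R V}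

def hyperbolicSplitting (hB : B.IsSymm) (he : B e e = 0) (hf : B f f = 0) (hef : B e f = 1)
    (hM : ∀ v, v ∈ M ↔ B v e = 0 ∧ B v f = 0) : V ≃ₗ[R] (Fin 2 → R) × M where
  toFun v := (![B v f, B v e], ⟨v - B v f • e - B v e • f,
    (hM _).2 ⟨by simp [he, hB.eq f e, hef], by simp [hf, hef]⟩⟩)
  invFun p := p.1 0 • e + p.1 1 • f + p.2
  map_add' v w := by
    ext i
    · fin_cases i <;> simp
    · simp only [map_add, LinearMap.add_apply, add_smul, Prod.mk_add_mk, AddMemClass.mk_add_mk]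
      abel
  map_smul' c v := by
    ext i
    · fin_cases i <;> simp
    · simp [smul_sub, mul_smul]
  left_inv v := by simp
  right_inv p := by
    have h := (hM _).1 p.2.2
    ext i
    · fin_cases i <;> simp [he, hf, hef, hB.eq f e, h.1, h.2]
    · simp only [map_add, map_smul, LinearMap.add_apply, smul_apply, smul_eq_mul, he, hf, hef,
        hB.eq f e, h.1, h.2, mul_one, mul_zero, add_zero, zero_add]
      abel

noncomputable def hyperbolicBasis (hB : B.IsSymm) (he : B e e = 0) (hf : B f f = 0)
    (hef : B e f = 1) (hM : ∀ v, v ∈ M ↔ B v e = 0 ∧ B v f = 0) {ι : Type*}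
    (b : Module.Basis ι R M) :
    Module.Basis (Fin 2 ⊕ ι) R V :=
  ((Pi.basisFun R (Fin 2)).prod b).map (hyperbolicSplitting hB he hf hef hM).symm

theorem finrank_eq_finrank_add_two [StrongRankCondition R] [Module.Free R M] [Module.Finite R M]
    (hB : B.IsSymm) (he : B e e = 0) (hf : B f f = 0) (hef : B e f = 1)
    (hM : ∀ v, v ∈ M ↔ B v e = 0 ∧ B v f = 0) :
    Module.finrank R V = Module.finrank R M + 2 := by
  rw [(hyperbolicSplitting hB he hf hef hM).finrank_eq, Module.finrank_prod,
    Module.finrank_fin_fun, add_comm]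

theorem toMatrix_hyperbolicBasis (hB : B.IsSymm) (he : B e e = 0) (hf : B f f = 0)
    (hef : B e f = 1) (hM : ∀ v, v ∈ M ↔ B v e = 0 ∧ B v f = 0) {ι : Type*} [Fintype ι]
    [DecidableEq ι] (b : Module.Basis ι R M) :
    B.toMatrix (hyperbolicBasis hB he hf hef hM b) =
      Matrix.fromBlocks !![0, 1; 1, 0] 0 0 (Matrix.of fun i j => B (b i) (b j)) := by
  have hb : ∀ i, B (b i) e = 0 ∧ B (b i) f = 0 := fun i => (hM _).1 (b i).2
  ext (k | i) (l | j)
  all_goals simp only [toMatrix_apply, hyperbolicBasis, Module.Basis.map_apply,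
    Module.Basis.prod_apply, hyperbolicSplitting]
  · fin_cases k <;> fin_cases l <;> simp [he, hf, hef, hB.eq f e]
  · fin_cases k <;> simp [hB.eq _ (b j : V), hb]
  · fin_cases l <;> simp [hb]
  · simp

theorem isUnit_det_gram_of_hyperbolic [Nontrivial R] (hB : B.IsSymm) (he : B e e = 0)
    (hf : B f f = 0) (hef : B e f = 1) (hM : ∀ v, v ∈ M ↔ B v e = 0 ∧ B v f = 0)
    {κ : Type*} [Fintype κ] [DecidableEq κ] (b₀ : Module.Basis κ R V)
    (hb₀ : IsUnit (B.toMatrix b₀).det) {ι : Type*} [Fintype ι] [DecidableEq ι]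
    (b : Module.Basis ι R M) :
    IsUnit (Matrix.of fun i j => B (b i) (b j)).det := by
  have h := (isUnit_det_toMatrix_iff B b₀ (hyperbolicBasis hB he hf hef hM b)).1 hb₀
  rw [toMatrix_hyperbolicBasis, Matrix.det_fromBlocks_zero₂₁, Matrix.det_fin_two_of] at h
  simpa using h

end LinearMap.BilinForm

open LinearMap.BilinForm

def E10Form : LinearMap.BilinForm ℤ (Fin 10 → ℤ) := Matrix.toBilin' E10Gram

theorem E10Form_apply (v w : Fin 10 → ℤ) : E10Form v w = E10Pair v w :=
  Matrix.toBilin'_apply _ _ _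

theorem E10Form_isSymm : E10Form.IsSymm :=
  Matrix.isSymm_toBilin'_iff_isSymm.2 (by decide)

/-- `U` is its own inverse and the `E₈` block is inverted by minus the inverse Cartan matrix. -/
def E10GramInv : Matrix (Fin 10) (Fin 10) ℤ :=
  !![0, 1, 0, 0, 0, 0, 0, 0, 0, 0;
     1, 0, 0, 0, 0, 0, 0, 0, 0, 0;
     0, 0, -4, -7, -10, -8, -6, -4, -2, -5;
     0, 0, -7, -14, -20, -16, -12, -8, -4, -10;
     0, 0, -10, -20, -30, -24, -18, -12, -6, -15;
     0, 0, -8, -16, -24, -20, -15, -10, -5, -12;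
     0, 0, -6, -12, -18, -15, -12, -8, -4, -9;
     0, 0, -4, -8, -12, -10, -8, -6, -3, -6;
     0, 0, -2, -4, -6, -5, -4, -3, -2, -3;
     0, 0, -5, -10, -15, -12, -9, -6, -3, -8]

theorem isUnit_det_toMatrix_E10Form :
    IsUnit (E10Form.toMatrix (Pi.basisFun ℤ (Fin 10))).det := by
  rw [toMatrix_basisFun, E10Form, toMatrix'_toBilin']
  exact Matrix.isUnit_det_of_right_inverse (B := E10GramInv) (by decide)

theorem E10Pair_self (v : Fin 10 → ℤ) : E10Pair v v = 2 * (v 0 * v 1 - v 2 ^ 2 + v 2 * v 3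
    - v 3 ^ 2 + v 3 * v 4 - v 4 ^ 2 + v 4 * v 5 + v 4 * v 9 - v 5 ^ 2 + v 5 * v 6 - v 6 ^ 2
    + v 6 * v 7 - v 7 ^ 2 + v 7 * v 8 - v 8 ^ 2 - v 9 ^ 2) := by
  simp only [E10Pair, E10Gram, of_apply, cons_val', cons_val_fin_one, Fin.sum_univ_succ,
    cons_val_zero, cons_val_succ, Fin.succ_zero_eq_one, Fin.succ_one_eq_two, Fin.reduceSucc,
    Finset.univ_unique, Fin.default_eq_zero, Finset.sum_singleton, mul_zero, zero_mul, mul_one,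
    add_zero, zero_add, mul_neg, neg_mul]
  ring

theorem E10Pair_self_neg_of_add_eq_zero {v : Fin 10 → ℤ} (h : v 0 + v 1 = 0) (hv : v ≠ 0) :
    E10Pair v v < 0 := by
  -- complete squares along the `E₈` chain; the weights clear the denominators
  have sos : -1680 * E10Pair v v = 840 * (v 0 - v 1) ^ 2 + 840 * (2 * v 2 - v 3) ^ 2
      + 280 * (3 * v 3 - 2 * v 4) ^ 2 + 140 * (4 * v 4 - 3 * v 5 - 3 * v 9) ^ 2
      + 84 * (5 * v 5 - 4 * v 6 - 3 * v 9) ^ 2 + 56 * (6 * v 6 - 5 * v 7 - 3 * v 9) ^ 2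
      + 40 * (7 * v 7 - 6 * v 8 - 3 * v 9) ^ 2 + 30 * (8 * v 8 - 3 * v 9) ^ 2
      + 210 * v 9 ^ 2 := by
    rw [E10Pair_self]
    linear_combination (-840 * (v 0 + v 1)) * h
  by_contra! hvv
  have sq_eq_zero : ∀ x : ℤ, x ^ 2 ≤ 0 → x = 0 := fun x hx =>
    pow_eq_zero_iff two_ne_zero |>.1 (le_antisymm hx (sq_nonneg x))
  obtain ⟨h01, h2, h3, h4, h5, h6, h7, h8, h9⟩ : v 0 - v 1 = 0 ∧ 2 * v 2 - v 3 = 0 ∧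
      3 * v 3 - 2 * v 4 = 0 ∧ 4 * v 4 - 3 * v 5 - 3 * v 9 = 0 ∧
      5 * v 5 - 4 * v 6 - 3 * v 9 = 0 ∧ 6 * v 6 - 5 * v 7 - 3 * v 9 = 0 ∧
      7 * v 7 - 6 * v 8 - 3 * v 9 = 0 ∧ 8 * v 8 - 3 * v 9 = 0 ∧ v 9 = 0 := by
    refine ⟨sq_eq_zero _ ?_, sq_eq_zero _ ?_, sq_eq_zero _ ?_, sq_eq_zero _ ?_, sq_eq_zero _ ?_,
      sq_eq_zero _ ?_, sq_eq_zero _ ?_, sq_eq_zero _ ?_, sq_eq_zero _ ?_⟩ <;>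
    linarith [sq_nonneg (v 0 - v 1), sq_nonneg (2 * v 2 - v 3), sq_nonneg (3 * v 3 - 2 * v 4),
      sq_nonneg (4 * v 4 - 3 * v 5 - 3 * v 9), sq_nonneg (5 * v 5 - 4 * v 6 - 3 * v 9),
      sq_nonneg (6 * v 6 - 5 * v 7 - 3 * v 9), sq_nonneg (7 * v 7 - 6 * v 8 - 3 * v 9),
      sq_nonneg (8 * v 8 - 3 * v 9), sq_nonneg (v 9)]
  exact hv (funext fun i => by fin_cases i <;> simp <;> omega)

/-- If `e, f ∈ E₁₀` satisfy `⟨e,e⟩ = ⟨f,f⟩ = 0` and `⟨e,f⟩ = 1`, and `M` is the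
submodule `{v : ⟨v,e⟩ = 0 ∧ ⟨v,f⟩ = 0}`, then `M` is free of rank `8`, and the
restricted form is even, negative definite, and unimodular (the Gram matrix of any
ℤ-basis of `M` has determinant `±1`). -/
theorem orthogonal_complement_props (e f : Fin 10 → ℤ)
    (he : E10Pair e e = 0) (hf : E10Pair f f = 0) (hef : E10Pair e f = 1)
    (M : Submodule ℤ (Fin 10 → ℤ))
    (hM : ∀ v : Fin 10 → ℤ, v ∈ M ↔ E10Pair v e = 0 ∧ E10Pair v f = 0) :
    Nonempty (Module.Basis (Fin 8) ℤ M) ∧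
    (∀ v ∈ M, (2 : ℤ) ∣ E10Pair v v) ∧
    (∀ v ∈ M, v ≠ 0 → E10Pair v v < 0) ∧
    (∀ b : Module.Basis (Fin 8) ℤ M,
      (Matrix.of fun i j : Fin 8 => E10Pair (b i : Fin 10 → ℤ) (b j : Fin 10 → ℤ)).det = 1 ∨
      (Matrix.of fun i j : Fin 8 => E10Pair (b i : Fin 10 → ℤ) (b j : Fin 10 → ℤ)).det = -1) := by
  simp only [← E10Form_apply] at he hf hef hM ⊢
  have hrank : Module.finrank ℤ M = 8 := by
    have := finrank_eq_finrank_add_two E10Form_isSymm he hf hef hM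
    rw [Module.finrank_fin_fun] at this
    omega
  refine ⟨⟨Module.finBasisOfFinrankEq ℤ M hrank⟩, fun v _ => ?_, fun v hv hv0 => ?_, fun b => ?_⟩
  · rw [E10Form_apply, E10Pair_self]
    exact dvd_mul_right 2 _
  · refine apply_self_neg_of_ortho_of_pos E10Form_isSymm
      (ℓ := (LinearMap.proj 0 : (Fin 10 → ℤ) →ₗ[ℤ] ℤ) + LinearMap.proj 1) (t := e + f)
      (fun x hx hx0 => ?_) ?_ (by simp [(hM v).1 hv]) hv0
    · rw [E10Form_apply]
      exact E10Pair_self_neg_of_add_eq_zero (by simpa using hx) hx0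
    · simp [he, hf, hef, E10Form_isSymm.eq f e]
  · exact Int.isUnit_iff.1 (isUnit_det_gram_of_hyperbolic E10Form_isSymm he hf hef hM _
      isUnit_det_toMatrix_E10Form b)
end

section
/- Let e, f ∈ E₁₀ satisfy ⟨e, e⟩ = ⟨f, f⟩ = 0 and ⟨e, f⟩ = 1, and let M = {v ∈ E₁₀ : ⟨v, e⟩ = 0 and ⟨v, f⟩ = 0} be the orthogonal complement of the span of e and f. Then M, with the restricted bilinear form, is isometric to the negative definite E₈ lattice: there exists a ℤ-linear bijection φ : M → ℤ⁸ such that ⟨v, w⟩ = q(φ(v), φ(w)) for all v, w ∈ M, where q is the bilinear form on ℤ⁸ with Gram matrix E₈(−1). (Conclusion of the proof of Proposition 2.8(2): the complement is even, unimodular and definite of rank 8, hence isomorphic to E₈ up to sign.) -/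
open Matrix BigOperators

/-- The Gram matrix of the negative definite `E₈` lattice: diagonal entries `−2` and
`(i,j)`-entry `1` when `i, j` are adjacent in the `E₈` Dynkin diagram. -/
def E8NegGram : Matrix (Fin 8) (Fin 8) ℤ :=
  !![-2,  1,  0,  0,  0,  0,  0,  0;
      1, -2,  1,  0,  0,  0,  0,  0;
      0,  1, -2,  1,  0,  0,  0,  1;
      0,  0,  1, -2,  1,  0,  0,  0;
      0,  0,  0,  1, -2,  1,  0,  0;
      0,  0,  0,  0,  1, -2,  1,  0;
      0,  0,  0,  0,  0,  1, -2,  0;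
      0,  0,  1,  0,  0,  0,  0, -2]

/-- The bilinear form on `ℤ⁸` with Gram matrix `E₈(−1)`. -/
def E8NegPair (v w : Fin 8 → ℤ) : ℤ := ∑ i, ∑ j, v i * E8NegGram i j * w j

/-!
Write `U ⊕ N` as `ℤ × ℤ × N`, so that `E₁₀ = U ⊕ E₈(−1)` has the standard hyperbolic pair
`(1,0,0), (0,1,0)`. An isometry of `E₁₀` moving `(e, f)` to the standard pair carries `M` onto
`E₈(−1)`, so it suffices to find one.

For isotropic `e = (a, b, z)` with `b ≠ 0`, the Eichler transvection
`(a, b, z) ↦ (a + ⟨z, w⟩ − ½⟨w, w⟩ b, b, z − b w)` followed by swapping the first two coordinates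
makes `|b|` smaller: isotropy gives `2ab = −⟨z, z⟩`, and as the covering radius of `E₈` is `1`, `w`
can be chosen with `0 ≤ −⟨z − b w, z − b w⟩ < 2b²`. Once `b = 0`, definiteness forces `z = 0` and
`⟨e, f⟩ = 1` forces `a = ±1`. A last transvection fixes `(1,0,0)` and moves `f` to `(0,1,0)`.

The covering bound is checked in the model `2E₈ = {P ∈ ℤ⁸ : all P i of equal parity, 4 ∣ ∑ P i}`:
for `X ∈ ℤ⁸` and `b > 0`, the better of the roundings of `X / b` to `(2ℤ)⁸` and to `(2ℤ + 1)⁸`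
gives `‖X − b P‖² ≤ 4b²`, and moving one coordinate of `P` by `±2` restores `4 ∣ ∑ P i` while
adding less than `4b²`.
-/

section Isometry

variable {V : Type*} [AddCommGroup V]

def IsIsometry (P : V → V → ℤ) (σ : V ≃ₗ[ℤ] V) : Prop :=
  ∀ x y, P (σ x) (σ y) = P x y

lemma IsIsometry.trans {P : V → V → ℤ} {σ τ : V ≃ₗ[ℤ] V} (hσ : IsIsometry P σ)
    (hτ : IsIsometry P τ) : IsIsometry P (σ.trans τ) :=
  fun x y => (hτ _ _).trans (hσ x y)

lemma isIsometry_refl (P : V → V → ℤ) : IsIsometry P (LinearEquiv.refl ℤ V) :=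
  fun _ _ => rfl

end Isometry

section UPlus

variable {N : Type*} [AddCommGroup N] (B : LinearMap.BilinForm ℤ N)

def uSumForm (x y : ℤ × ℤ × N) : ℤ := x.1 * y.2.1 + x.2.1 * y.1 + B x.2.2 y.2.2

@[simp] lemma uSumForm_one_zero_zero (x : ℤ × ℤ × N) : uSumForm B x (1, 0, 0) = x.2.1 := by
  simp [uSumForm]

@[simp] lemma uSumForm_zero_one_zero (x : ℤ × ℤ × N) : uSumForm B x (0, 1, 0) = x.1 := by
  simp [uSumForm]

def uSwap : (ℤ × ℤ × N) ≃ₗ[ℤ] ℤ × ℤ × N where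
  toFun x := (x.2.1, x.1, x.2.2)
  invFun x := (x.2.1, x.1, x.2.2)
  map_add' _ _ := rfl
  map_smul' _ _ := rfl
  left_inv _ := rfl
  right_inv _ := rfl

def uNeg : (ℤ × ℤ × N) ≃ₗ[ℤ] ℤ × ℤ × N where
  toFun x := (-x.1, -x.2.1, x.2.2)
  invFun x := (-x.1, -x.2.1, x.2.2)
  map_add' _ _ := by ext <;> simp [add_comm]
  map_smul' _ _ := by ext <;> simp
  left_inv _ := by simp
  right_inv _ := by simp

@[simp] lemma uSwap_apply (x : ℤ × ℤ × N) : uSwap x = (x.2.1, x.1, x.2.2) := rfl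

@[simp] lemma uNeg_apply (x : ℤ × ℤ × N) : uNeg x = (-x.1, -x.2.1, x.2.2) := rfl

lemma isIsometry_uSwap : IsIsometry (uSumForm B) uSwap := by
  intro x y
  simp only [uSumForm, uSwap_apply]
  ring

lemma isIsometry_uNeg : IsIsometry (uSumForm B) uNeg := by
  intro x y
  simp only [uSumForm, uNeg_apply]
  ring

def eichlerMap (w : N) : (ℤ × ℤ × N) →ₗ[ℤ] ℤ × ℤ × N where
  toFun x := (x.1 + B x.2.2 w - B w w / 2 * x.2.1, x.2.1, x.2.2 - x.2.1 • w)
  map_add' x y := by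
    ext
    · simp only [Prod.fst_add, Prod.snd_add, map_add, LinearMap.add_apply]
      ring
    · rfl
    · simp only [Prod.snd_add, Prod.fst_add, add_smul]
      abel
  map_smul' c x := by
    ext
    · simp only [Prod.smul_fst, Prod.smul_snd, map_smul, LinearMap.smul_apply, smul_eq_mul,
        RingHom.id_apply]
      ring
    · rfl
    · simp [mul_smul, smul_sub]

@[simp] lemma eichlerMap_apply (w : N) (x : ℤ × ℤ × N) :
    eichlerMap B w x = (x.1 + B x.2.2 w - B w w / 2 * x.2.1, x.2.1, x.2.2 - x.2.1 • w) := rfl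

variable {B}

lemma eichlerMap_neg_apply_eichlerMap (hev : ∀ w, Even (B w w)) (w : N) (x : ℤ × ℤ × N) :
    eichlerMap B (-w) (eichlerMap B w x) = x := by
  have h := Int.two_mul_ediv_two_of_even (hev w)
  ext
  · simp
    linear_combination -x.2.1 * h
  · simp
  · simp

def eichler (hev : ∀ w, Even (B w w)) (w : N) : (ℤ × ℤ × N) ≃ₗ[ℤ] ℤ × ℤ × N :=
  LinearEquiv.ofLinearMap (f := eichlerMap B w) (g := eichlerMap B (-w))
    (LinearMap.ext fun x => by simpa using eichlerMap_neg_apply_eichlerMap hev (-w) x)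
    (LinearMap.ext <| eichlerMap_neg_apply_eichlerMap hev w)

@[simp] lemma eichler_apply (hev : ∀ w, Even (B w w)) (w : N) (x : ℤ × ℤ × N) :
    eichler hev w x = eichlerMap B w x := rfl

lemma isIsometry_eichler (hB : B.IsSymm) (hev : ∀ w, Even (B w w)) (w : N) :
    IsIsometry (uSumForm B) (eichler hev w) := by
  intro x y
  have h := Int.two_mul_ediv_two_of_even (hev w)
  simp only [uSumForm, eichler_apply, eichlerMap_apply, map_sub, map_smul,
    LinearMap.sub_apply, LinearMap.smul_apply, smul_eq_mul, hB.eq y.2.2 w]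
  linear_combination (-x.2.1 * y.2.1) * h

lemma natAbs_lt_natAbs_of_nonneg_of_mul_lt_sq {a b : ℤ} (h₀ : 0 ≤ a * b) (h : a * b < b ^ 2) :
    a.natAbs < b.natAbs := by
  rw [Int.natAbs_lt_iff_sq_lt]
  nlinarith

lemma exists_isometry_apply_eq_of_snd_eq_zero (hneg : ∀ z, z ≠ 0 → B z z < 0)
    {e g : ℤ × ℤ × N} (he : uSumForm B e e = 0) (heg : uSumForm B e g = 1) (hb : e.2.1 = 0) :
    ∃ σ, IsIsometry (uSumForm B) σ ∧ σ e = (1, 0, 0) := by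
  obtain ⟨a, b, z⟩ := e
  obtain rfl : b = 0 := hb
  obtain rfl : z = 0 := by
    by_contra hz
    have := hneg z hz
    simp only [uSumForm] at he
    linarith
  simp only [uSumForm, map_zero, LinearMap.zero_apply] at heg
  rcases Int.eq_one_or_neg_one_of_mul_eq_one (by linarith : a * g.2.1 = 1) with rfl | rfl
  · exact ⟨LinearEquiv.refl ℤ _, isIsometry_refl _, rfl⟩
  · exact ⟨uNeg, isIsometry_uNeg B, by simp⟩

lemma exists_isometry_natAbs_snd_lt (hB : B.IsSymm) (hev : ∀ w, Even (B w w))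
    (hneg : ∀ z, z ≠ 0 → B z z < 0)
    (hcover : ∀ (z : N) (b : ℤ), b ≠ 0 → ∃ w, -B (z - b • w) (z - b • w) < 2 * b ^ 2)
    {e : ℤ × ℤ × N} (he : uSumForm B e e = 0) (hb : e.2.1 ≠ 0) :
    ∃ σ, IsIsometry (uSumForm B) σ ∧ (σ e).2.1.natAbs < e.2.1.natAbs := by
  obtain ⟨w, hw⟩ := hcover e.2.2 e.2.1 hb
  refine ⟨(eichler hev w).trans uSwap, (isIsometry_eichler hB hev w).trans (isIsometry_uSwap B), ?_⟩
  set x := eichler hev w e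
  set z := e.2.2 - e.2.1 • w
  show x.1.natAbs < e.2.1.natAbs
  have hx : x.2 = (e.2.1, z) := rfl
  have hx₀ : 2 * (x.1 * e.2.1) = -B z z := by
    have : uSumForm B x x = 0 := (isIsometry_eichler hB hev w e e).trans he
    simp only [uSumForm, hx] at this
    linarith
  have hz : 0 ≤ -B z z := by
    by_cases h : z = 0
    · simp [h]
    · linarith [hneg z h]
  exact natAbs_lt_natAbs_of_nonneg_of_mul_lt_sq (by linarith) (by linarith)

theorem exists_isometry_apply_eq_one_zero_zero (hB : B.IsSymm) (hev : ∀ w, Even (B w w))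
    (hneg : ∀ z, z ≠ 0 → B z z < 0)
    (hcover : ∀ (z : N) (b : ℤ), b ≠ 0 → ∃ w, -B (z - b • w) (z - b • w) < 2 * b ^ 2)
    {e g : ℤ × ℤ × N} (he : uSumForm B e e = 0) (heg : uSumForm B e g = 1) :
    ∃ σ, IsIsometry (uSumForm B) σ ∧ σ e = (1, 0, 0) := by
  induction hn : e.2.1.natAbs using Nat.strong_induction_on generalizing e g with
  | _ n ih =>
    by_cases hb : e.2.1 = 0
    · exact exists_isometry_apply_eq_of_snd_eq_zero hneg he heg hb
    obtain ⟨σ, hσ, hlt⟩ := exists_isometry_natAbs_snd_lt hB hev hneg hcover he hb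
    obtain ⟨τ, hτ, hτe⟩ := ih _ (hn ▸ hlt) ((hσ e e).trans he) ((hσ e g).trans heg) rfl
    exact ⟨σ.trans τ, hσ.trans hτ, hτe⟩

theorem exists_isometry_apply_eq_standard_pair (hB : B.IsSymm) (hev : ∀ w, Even (B w w))
    (hneg : ∀ z, z ≠ 0 → B z z < 0)
    (hcover : ∀ (z : N) (b : ℤ), b ≠ 0 → ∃ w, -B (z - b • w) (z - b • w) < 2 * b ^ 2)
    {e f : ℤ × ℤ × N} (he : uSumForm B e e = 0) (hf : uSumForm B f f = 0)
    (hef : uSumForm B e f = 1) :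
    ∃ σ, IsIsometry (uSumForm B) σ ∧ σ e = (1, 0, 0) ∧ σ f = (0, 1, 0) := by
  obtain ⟨σ, hσ, hσe⟩ := exists_isometry_apply_eq_one_zero_zero hB hev hneg hcover he hef
  have hσf₁ : (σ f).2.1 = 1 := by
    simpa [uSumForm, hσe] using (hσ e f).trans hef
  have hσf₀ : 2 * (σ f).1 + B (σ f).2.2 (σ f).2.2 = 0 := by
    have := (hσ f f).trans hf
    simp only [uSumForm, hσf₁] at this
    linarith
  refine ⟨σ.trans (eichler hev (σ f).2.2), hσ.trans (isIsometry_eichler hB hev _), ?_, ?_⟩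
  · simp [hσe]
  · ext
    · simp only [LinearEquiv.trans_apply, eichler_apply, eichlerMap_apply, hσf₁]
      omega
    · simp [hσf₁]
    · simp [hσf₁]

theorem exists_equiv_of_isometry_apply_eq_standard_pair {V : Type*} [AddCommGroup V]
    {P : V → V → ℤ} (τ : V ≃ₗ[ℤ] ℤ × ℤ × N) (hτ : ∀ v w, uSumForm B (τ v) (τ w) = P v w)
    {e f : V} (hτe : τ e = (1, 0, 0)) (hτf : τ f = (0, 1, 0))
    (M : Submodule ℤ V) (hM : ∀ v, v ∈ M ↔ P v e = 0 ∧ P v f = 0) :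
    ∃ φ : M ≃ₗ[ℤ] N, ∀ v w : M, P v w = B (φ v) (φ w) := by
  have hτM : ∀ v, v ∈ M ↔ τ v = (0, 0, (τ v).2.2) := by
    intro v
    rw [hM, ← hτ, ← hτ, hτe, hτf, uSumForm_one_zero_zero, uSumForm_zero_one_zero]
    constructor
    · rintro ⟨h₁, h₀⟩
      ext <;> simp [h₀, h₁]
    · intro h
      rw [h]
      simp
  let φ : M ≃ₗ[ℤ] N :=
    { toFun v := (τ v).2.2
      map_add' _ _ := by simp
      map_smul' _ _ := by simp
      invFun u := ⟨τ.symm (0, 0, u), (hτM _).2 (by simp)⟩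
      left_inv v := Subtype.ext (τ.symm_apply_eq.2 ((hτM v).1 v.2).symm)
      right_inv u := by simp }
  refine ⟨φ, fun v w => ?_⟩
  rw [← hτ, (hτM v).1 v.2, (hτM w).1 w.2]
  simp [uSumForm, φ]

end UPlus

section Covering

variable {ι : Type*} [Fintype ι]

lemma sq_sub_add_sq_sub_le {x b : ℤ} (hb : 0 < b) (δ : ℤ) (hδ : δ = 0 ∨ δ = 1) :
    (x - b * (x / b + δ)) ^ 2 + (x - b * (x / b + 1 - δ)) ^ 2 ≤ b ^ 2 := by
  have h₀ : 0 ≤ x - b * (x / b) := by rw [← Int.emod_def]; exact Int.emod_nonneg x hb.ne'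
  have h₁ : x - b * (x / b) < b := by rw [← Int.emod_def]; exact Int.emod_lt_of_pos x hb
  rcases hδ with rfl | rfl <;> nlinarith

lemma exists_forall_modEq_two_dotProduct_le (X : ι → ℤ) {b : ℤ} (hb : 0 < b) :
    ∃ P : ι → ℤ, (∀ i j, P i ≡ P j [ZMOD 2]) ∧
      2 * ((X - b • P) ⬝ᵥ (X - b • P)) ≤ Fintype.card ι * b ^ 2 := by
  -- `P₀ i` and `P₁ i` are the even and the odd one of `⌊X i / b⌋` and `⌊X i / b⌋ + 1`
  let δ : ι → ℤ := fun i => -(X i / b) % 2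
  let P₀ : ι → ℤ := fun i => X i / b + δ i
  let P₁ : ι → ℤ := fun i => X i / b + 1 - δ i
  have hδ : ∀ i, δ i = 0 ∨ δ i = 1 := fun i => Int.emod_two_eq_zero_or_one _
  have hsum : (X - b • P₀) ⬝ᵥ (X - b • P₀) + (X - b • P₁) ⬝ᵥ (X - b • P₁)
      ≤ Fintype.card ι * b ^ 2 := by
    simp only [dotProduct, ← Finset.sum_add_distrib, Pi.sub_apply, Pi.smul_apply, smul_eq_mul,
      ← sq]
    calc _ ≤ ∑ _i : ι, b ^ 2 := Finset.sum_le_sum fun i _ => sq_sub_add_sq_sub_le hb _ (hδ i)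
      _ = _ := by simp
  by_cases h : (X - b • P₀) ⬝ᵥ (X - b • P₀) ≤ (X - b • P₁) ⬝ᵥ (X - b • P₁)
  · exact ⟨P₀, fun i j => by simp only [Int.ModEq, P₀, δ]; omega, by linarith⟩
  · exact ⟨P₁, fun i j => by simp only [Int.ModEq, P₁, δ]; omega, by linarith⟩

lemma dotProduct_sub_single_self [DecidableEq ι] (E : ι → ℤ) (j : ι) (c : ℤ) :
    (E - Pi.single j c) ⬝ᵥ (E - Pi.single j c) = E ⬝ᵥ E - 2 * c * E j + c ^ 2 := by
  simp only [sub_dotProduct, dotProduct_sub, dotProduct_single, single_dotProduct,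
    Pi.sub_apply, Pi.single_eq_same]
  ring

lemma exists_dotProduct_sub_single_lt [DecidableEq ι] [Nonempty ι] (E : ι → ℤ) {b : ℤ}
    (hb : 0 < b) (hE : E ⬝ᵥ E ≤ 4 * b ^ 2) :
    ∃ j, ∃ s : ℤ, (s = 1 ∨ s = -1) ∧
      (E - Pi.single j (2 * b * s)) ⬝ᵥ (E - Pi.single j (2 * b * s)) < 8 * b ^ 2 := by
  obtain ⟨j, hj⟩ : ∃ j, E = 0 ∨ E j ≠ 0 := by
    by_cases h : E = 0
    · exact ⟨Classical.arbitrary ι, .inl h⟩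
    · obtain ⟨j, hj⟩ := Function.ne_iff.1 h
      exact ⟨j, .inr hj⟩
  -- move `E j` by `2b` towards `0`
  let s : ℤ := if 0 ≤ E j then 1 else -1
  have hs : s = 1 ∨ s = -1 := by unfold s; split_ifs <;> simp
  have hsE : s * E j = |E j| := by
    unfold s
    split_ifs with h
    · simp [abs_of_nonneg h]
    · simp [abs_of_neg (not_le.1 h)]
  have hs2 : s ^ 2 = 1 := by rcases hs with hs | hs <;> simp [hs]
  refine ⟨j, s, hs, ?_⟩
  rw [dotProduct_sub_single_self,
    show E ⬝ᵥ E - 2 * (2 * b * s) * E j + (2 * b * s) ^ 2 = E ⬝ᵥ E - 4 * b * |E j| + 4 * b ^ 2 by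
      linear_combination (-4 * b) * hsE + 4 * b ^ 2 * hs2]
  rcases hj with h | h
  · simp only [h, dotProduct_zero, Pi.zero_apply, abs_zero]
    nlinarith
  · nlinarith [mul_le_mul_of_nonneg_left (Int.one_le_abs h) hb.le]

end Covering

/-- `2E₈` in the coordinates `E₈ = D₈ ∪ (D₈ + ½𝟙) ⊂ ℝ⁸`. -/
def doubledE8 : Set (Fin 8 → ℤ) := {P | (∀ i j, P i ≡ P j [ZMOD 2]) ∧ ∑ i, P i ≡ 0 [ZMOD 4]}

lemma exists_mem_doubledE8_dotProduct_lt (X P : Fin 8 → ℤ) {b : ℤ} (hb : 0 < b)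
    (hP : ∀ i j, P i ≡ P j [ZMOD 2]) (hX : (X - b • P) ⬝ᵥ (X - b • P) ≤ 4 * b ^ 2) :
    ∃ P' ∈ doubledE8, (X - b • P') ⬝ᵥ (X - b • P') < 8 * b ^ 2 := by
  by_cases h₄ : ∑ i, P i ≡ 0 [ZMOD 4]
  · exact ⟨P, ⟨hP, h₄⟩, by nlinarith⟩
  have h₂ : ∑ i, P i ≡ 2 [ZMOD 4] := by
    have := hP 1 0; have := hP 2 0; have := hP 3 0; have := hP 4 0
    have := hP 5 0; have := hP 6 0; have := hP 7 0
    simp only [Int.ModEq, Fin.sum_univ_eight] at *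
    omega
  obtain ⟨j, s, hs, hlt⟩ := exists_dotProduct_sub_single_lt (X - b • P) hb hX
  refine ⟨P + Pi.single j (2 * s), ⟨fun i k => ?_, ?_⟩, ?_⟩
  · have := hP i k
    simp only [Int.ModEq, Pi.add_apply, Pi.single_apply] at *
    split_ifs <;> omega
  · simp only [Pi.add_apply, Finset.sum_add_distrib, Finset.sum_pi_single', Finset.mem_univ,
      if_true]
    simp only [Int.ModEq] at *
    omega
  · convert hlt using 2 <;>
    · ext i
      simp only [Pi.sub_apply, Pi.add_apply, Pi.smul_apply, smul_eq_mul, Pi.single_apply]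
      split_ifs <;> ring

def e8Form : LinearMap.BilinForm ℤ (Fin 8 → ℤ) := Matrix.toBilin' E8NegGram

lemma e8Form_apply (v w : Fin 8 → ℤ) : e8Form v w = E8NegPair v w := Matrix.toBilin'_apply _ _ _

lemma e8Form_isSymm : e8Form.IsSymm := Matrix.isSymm_toBilin'_iff_isSymm.2 (by decide)

lemma even_e8Form_self (w : Fin 8 → ℤ) : Even (e8Form w w) := by
  refine ⟨-(w 0 ^ 2 + w 1 ^ 2 + w 2 ^ 2 + w 3 ^ 2 + w 4 ^ 2 + w 5 ^ 2 + w 6 ^ 2 + w 7 ^ 2) +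
    (w 0 * w 1 + w 1 * w 2 + w 2 * w 3 + w 3 * w 4 + w 4 * w 5 + w 5 * w 6 + w 2 * w 7), ?_⟩
  simp [e8Form_apply, E8NegPair, E8NegGram, Fin.sum_univ_eight]
  ring

/-- Column `j` is twice the simple root `αⱼ` in the model `E₈ = D₈ ∪ (D₈ + ½𝟙) ⊂ ℝ⁸`. -/
def e8CoordMatrix : Matrix (Fin 8) (Fin 8) ℤ :=
  !![ 1, -2,  0,  0,  0,  0,  0, 2;
     -1,  2, -2,  0,  0,  0,  0, 2;
     -1,  0,  2, -2,  0,  0,  0, 0;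
     -1,  0,  0,  2, -2,  0,  0, 0;
     -1,  0,  0,  0,  2, -2,  0, 0;
     -1,  0,  0,  0,  0,  2, -2, 0;
     -1,  0,  0,  0,  0,  0,  2, 0;
      1,  0,  0,  0,  0,  0,  0, 0]

lemma e8CoordMatrix_transpose_mul_self : e8CoordMatrixᵀ * e8CoordMatrix = -4 • E8NegGram := by
  decide

lemma dotProduct_e8CoordMatrix_mulVec (v w : Fin 8 → ℤ) :
    (e8CoordMatrix *ᵥ v) ⬝ᵥ (e8CoordMatrix *ᵥ w) = -4 * e8Form v w := by
  rw [dotProduct_mulVec, ← vecMul_transpose, vecMul_vecMul, e8CoordMatrix_transpose_mul_self,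
    e8Form, Matrix.toBilin'_apply', dotProduct_mulVec, vecMul_smul, smul_dotProduct, smul_eq_mul]

lemma e8CoordMatrix_mulVec (w : Fin 8 → ℤ) : e8CoordMatrix *ᵥ w =
    ![w 0 - 2 * w 1 + 2 * w 7, -w 0 + 2 * w 1 - 2 * w 2 + 2 * w 7, -w 0 + 2 * w 2 - 2 * w 3,
      -w 0 + 2 * w 3 - 2 * w 4, -w 0 + 2 * w 4 - 2 * w 5, -w 0 + 2 * w 5 - 2 * w 6,
      -w 0 + 2 * w 6, w 0] := by
  ext i
  fin_cases i <;> simp [e8CoordMatrix, mulVec, dotProduct, Fin.sum_univ_eight] <;> ring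

lemma eq_zero_of_e8CoordMatrix_mulVec_eq_zero {w : Fin 8 → ℤ} (hw : e8CoordMatrix *ᵥ w = 0) :
    w = 0 := by
  rw [e8CoordMatrix_mulVec] at hw
  simp only [cons_eq_zero_iff, zero_empty, and_true] at hw
  obtain ⟨h₀, h₁, h₂, h₃, h₄, h₅, h₆, h₇⟩ := hw
  ext i
  fin_cases i <;> simp <;> omega

lemma e8Form_self_neg {z : Fin 8 → ℤ} (hz : z ≠ 0) : e8Form z z < 0 := by
  have hC : e8CoordMatrix *ᵥ z ≠ 0 := fun h => hz (eq_zero_of_e8CoordMatrix_mulVec_eq_zero h)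
  have hpos : 0 < (e8CoordMatrix *ᵥ z) ⬝ᵥ (e8CoordMatrix *ᵥ z) :=
    (Finset.sum_nonneg fun i _ => mul_self_nonneg _).lt_of_ne
      (Ne.symm (dotProduct_self_eq_zero.not.2 hC))
  linarith [dotProduct_e8CoordMatrix_mulVec z z]

lemma exists_e8CoordMatrix_mulVec_eq {P : Fin 8 → ℤ} (hP : P ∈ doubledE8) :
    ∃ w, e8CoordMatrix *ᵥ w = P := by
  obtain ⟨hpar, hsum⟩ := hP
  have := hpar 0 7; have := hpar 1 7; have := hpar 2 7; have := hpar 3 7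
  have := hpar 4 7; have := hpar 5 7; have := hpar 6 7
  simp only [Int.ModEq, Fin.sum_univ_eight] at *
  -- solve the triangular system from the last coordinate upwards
  let w₇ := (P 0 + P 1 + P 2 + P 3 + P 4 + P 5 + P 6 + 5 * P 7) / 4
  refine ⟨![P 7, (P 7 - P 0 + 2 * w₇) / 2, (P 2 + P 3 + P 4 + P 5 + P 6 + 5 * P 7) / 2,
    (P 3 + P 4 + P 5 + P 6 + 4 * P 7) / 2, (P 4 + P 5 + P 6 + 3 * P 7) / 2,
    (P 5 + P 6 + 2 * P 7) / 2, (P 6 + P 7) / 2, w₇], ?_⟩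
  rw [e8CoordMatrix_mulVec]
  ext i
  fin_cases i <;> simp [w₇] <;> omega

lemma exists_neg_e8Form_sub_smul_lt (z : Fin 8 → ℤ) {b : ℤ} (hb : b ≠ 0) :
    ∃ w, -e8Form (z - b • w) (z - b • w) < 2 * b ^ 2 := by
  wlog hb' : 0 < b generalizing b
  · obtain ⟨w, hw⟩ := this (neg_ne_zero.2 hb) (by omega)
    exact ⟨-w, by simpa using hw⟩
  obtain ⟨P, hP, hPX⟩ := exists_forall_modEq_two_dotProduct_le (e8CoordMatrix *ᵥ z) hb'
  rw [Fintype.card_fin, Nat.cast_ofNat] at hPX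
  obtain ⟨P', hP', hlt⟩ := exists_mem_doubledE8_dotProduct_lt _ P hb' hP (by linarith)
  obtain ⟨w, rfl⟩ := exists_e8CoordMatrix_mulVec_eq hP'
  refine ⟨w, ?_⟩
  have := dotProduct_e8CoordMatrix_mulVec (z - b • w) (z - b • w)
  rw [mulVec_sub, mulVec_smul] at this
  linarith

def e10Split : (Fin 10 → ℤ) ≃ₗ[ℤ] ℤ × ℤ × (Fin 8 → ℤ) :=
  (Fin.consLinearEquiv ℤ fun _ : Fin 10 => ℤ).symm.trans
    ((LinearEquiv.refl ℤ ℤ).prodCongr (Fin.consLinearEquiv ℤ fun _ : Fin 9 => ℤ).symm)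

lemma uSumForm_e10Split (v w : Fin 10 → ℤ) :
    uSumForm e8Form (e10Split v) (e10Split w) = E10Pair v w := by
  simp [e10Split, uSumForm, e8Form_apply, E10Pair, E8NegPair, E8NegGram, E10Gram,
    Fin.sum_univ_succ, Fin.tail]
  ring

/-- If `e, f ∈ E₁₀` satisfy `⟨e,e⟩ = ⟨f,f⟩ = 0` and `⟨e,f⟩ = 1`, then the orthogonal
complement `M = {v : ⟨v,e⟩ = 0 ∧ ⟨v,f⟩ = 0}` with the restricted form is isometric to
the negative definite `E₈` lattice: there is a ℤ-linear bijection `φ : M → ℤ⁸` with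
`⟨v, w⟩ = q(φ v, φ w)` for all `v, w ∈ M`, where `q` has Gram matrix `E₈(−1)`. -/
theorem orthogonal_complement_isometric_E8 (e f : Fin 10 → ℤ)
    (he : E10Pair e e = 0) (hf : E10Pair f f = 0) (hef : E10Pair e f = 1)
    (M : Submodule ℤ (Fin 10 → ℤ))
    (hM : ∀ v : Fin 10 → ℤ, v ∈ M ↔ E10Pair v e = 0 ∧ E10Pair v f = 0) :
    ∃ φ : M ≃ₗ[ℤ] (Fin 8 → ℤ),
      ∀ v w : M, E10Pair (v : Fin 10 → ℤ) (w : Fin 10 → ℤ) = E8NegPair (φ v) (φ w) := by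
  obtain ⟨σ, hσ, hσe, hσf⟩ := exists_isometry_apply_eq_standard_pair e8Form_isSymm
    even_e8Form_self (fun _ => e8Form_self_neg) (fun z _ => exists_neg_e8Form_sub_smul_lt z)
    (e := e10Split e) (f := e10Split f) (by rwa [uSumForm_e10Split])
    (by rwa [uSumForm_e10Split]) (by rwa [uSumForm_e10Split])
  obtain ⟨φ, hφ⟩ := exists_equiv_of_isometry_apply_eq_standard_pair (e10Split.trans σ)
    (fun v w => (hσ _ _).trans (uSumForm_e10Split v w)) hσe hσf M hM
  exact ⟨φ, fun v w => (hφ v w).trans (e8Form_apply _ _)⟩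
end

section
/- Let R be a commutative ring and let Q be a polynomial in R[x₀, x₁, x₂, x₃]. Define the Enriques sextic polynomial S = x₀²x₁²x₂² + x₀²x₁²x₃² + x₀²x₂²x₃² + x₁²x₂²x₃² + x₀x₁x₂x₃·Q and the Castelnuovo quintic polynomial C = x₀·(x₁²x₂² + x₁²x₃² + x₂²x₃² + x₀²x₁²) + x₁·Q', where Q' = σ(Q) and σ : R[x₀, x₁, x₂, x₃] → R[x₀, x₁, x₂, x₃] is the R-algebra homomorphism determined by the Cremona substitution x₀ ↦ x₂x₃, x₁ ↦ x₀x₁, x₂ ↦ x₀x₂, x₃ ↦ x₀x₃. Then σ(S) = x₀³x₂²x₃²·C, i.e. substituting the Cremona transformation into the Enriques sextic yields x₀³x₂²x₃² times the Castelnuovo quintic. (Polynomial identity underlying Castelnuovo's observation in Section 6 that every Enriques sextic is transformed into a Castelnuovo quintic by the Cremona transformation [x₀:x₁:x₂:x₃] ↦ [x₂x₃:x₀x₁:x₀x₂:x₀x₃].) -/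
open MvPolynomial

/-- The Cremona substitution `x₀ ↦ x₂x₃, x₁ ↦ x₀x₁, x₂ ↦ x₀x₂, x₃ ↦ x₀x₃` as an
`R`-algebra endomorphism of `R[x₀,x₁,x₂,x₃]`. -/
noncomputable def cremona (R : Type*) [CommRing R] :
    MvPolynomial (Fin 4) R →ₐ[R] MvPolynomial (Fin 4) R :=
  aeval ![X 2 * X 3, X 0 * X 1, X 0 * X 2, X 0 * X 3]

/-- Substituting the Cremona transformation
`[x₀:x₁:x₂:x₃] ↦ [x₂x₃:x₀x₁:x₀x₂:x₀x₃]` into the Enriques sextic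
`x₀²x₁²x₂² + x₀²x₁²x₃² + x₀²x₂²x₃² + x₁²x₂²x₃² + x₀x₁x₂x₃·Q` yields
`x₀³x₂²x₃²` times the Castelnuovo quintic
`x₀(x₁²x₂² + x₁²x₃² + x₂²x₃² + x₀²x₁²) + x₁·Q'`, where `Q' = σ(Q)`. -/
theorem cremona_enriques_sextic_eq_castelnuovo_quintic
    (R : Type*) [CommRing R] (Q : MvPolynomial (Fin 4) R) :
    cremona R (X 0 ^ 2 * X 1 ^ 2 * X 2 ^ 2 + X 0 ^ 2 * X 1 ^ 2 * X 3 ^ 2 +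
        X 0 ^ 2 * X 2 ^ 2 * X 3 ^ 2 + X 1 ^ 2 * X 2 ^ 2 * X 3 ^ 2 +
        X 0 * X 1 * X 2 * X 3 * Q) =
      X 0 ^ 3 * X 2 ^ 2 * X 3 ^ 2 *
        (X 0 * (X 1 ^ 2 * X 2 ^ 2 + X 1 ^ 2 * X 3 ^ 2 + X 2 ^ 2 * X 3 ^ 2 +
            X 0 ^ 2 * X 1 ^ 2) + X 1 * cremona R Q) := by
  simp only [cremona, map_add, map_mul, map_pow, aeval_X]
  simp [Matrix.cons_val_zero, Matrix.cons_val_one]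
  ring
end
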